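/- Let γ ∈ ℝ satisfy 6γ³ − 18γ² + 9γ − 1 = 0 with γ ≈ 0.43586652150845900 (the middle root), and assume all denominators below are nonzero. Define b = ( (2γ+1)/(4γ+8), (31−14γ)/(352−900γ), (320γ+224)/(575−477γ), γ )ᵀ, c = (0, 2γ, (γ+2)/4, 1)ᵀ, the ESDIRK matrix Aᴵ with rows (0,0,0,0), (γ,γ,0,0), ((215γ+424)/(2624−1536γ), (264−841γ)/(1536γ+448), γ, 0), (b₁, b₂, b₃, γ), and the explicit matrix Aᴱ with rows (0,0,0,0), (2γ,0,0,0), ((12526987γ+655304)/(8876160γ+7175968), 15(215γ+152)/(2144(92γ−9)), 0, 0), ((2370311γ−563481)/(134(17071γ+921)), (380783−137789γ)/(134(17727γ−15511)), (1000−304γ)/(1371γ+379), 0). Then Aᴵ𝟙 = Aᴱ𝟙 = c, and both component Runge–Kutta methods satisfy the third-order conditions: bᵀ𝟙 = 1, bᵀc = 1/2, bᵀ(c∘c) = 1/3, bᵀAᴵc = 1/6, and bᵀAᴱc = 1/6. Consequently the ADI-GARK method built from (Aᴵ, Aᴱ, b) is third order. -/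

import Mathlib

open Matrix

/-- The GARK order conditions up to order `p` (meaningful for `p ≤ 4`). -/
def GARKOrderConditions {s N : ℕ} (p : ℕ)
    (A : Fin N → Fin N → Matrix (Fin s) (Fin s) ℝ)
    (b : Fin N → Fin s → ℝ) : Prop :=
  let c : Fin N → Fin N → Fin s → ℝ := fun q m => (A q m).mulVec 1
  (1 ≤ p → ∀ σ, b σ ⬝ᵥ (1 : Fin s → ℝ) = 1) ∧
  (2 ≤ p → ∀ σ ν, b σ ⬝ᵥ c σ ν = 1 / 2) ∧
  (3 ≤ p → (∀ σ ν μ, b σ ⬝ᵥ (c σ ν * c σ μ) = 1 / 3) ∧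
           (∀ σ ν μ, b σ ⬝ᵥ (A σ ν).mulVec (c ν μ) = 1 / 6)) ∧
  (4 ≤ p → (∀ lam σ ν μ, b σ ⬝ᵥ (c σ lam * c σ μ * c σ ν) = 1 / 4) ∧
           (∀ lam σ ν μ, (b σ * c σ μ) ⬝ᵥ (A σ ν).mulVec (c ν lam) = 1 / 8) ∧
           (∀ lam σ ν μ, b σ ⬝ᵥ (A σ lam).mulVec (c lam μ * c lam ν) = 1 / 12) ∧
           (∀ lam σ ν μ, b σ ⬝ᵥ (A σ lam).mulVec ((A lam ν).mulVec (c ν μ)) = 1 / 24))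

/-- The blocks of the `N`-partition ADI-GARK method built from an implicit block `Aᴵ`
(used on and below the diagonal) and an explicit block `Aᴱ` (above the diagonal). -/
def ADIGARKBlocks {s : ℕ} (N : ℕ) (AI AE : Matrix (Fin s) (Fin s) ℝ) :
    Fin N → Fin N → Matrix (Fin s) (Fin s) ℝ :=
  fun q m => if (m : ℕ) ≤ (q : ℕ) then AI else AE

/-!
Every block of an ADI-GARK tableau is `Aᴵ` or `Aᴱ`; once both have row sums `c`, all
block abscissae coincide with `c`, and the GARK conditions of order three collapse to the
classical ones for `(Aᴵ, b)` and `(Aᴱ, b)`. For the concrete tableau each of those conditions,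
after clearing the denominators, is a polynomial identity in `γ` whose two sides differ by
an explicit multiple of `6γ³ - 18γ² + 9γ - 1`.
-/

lemma ADIGARKBlocks.induction {s N : ℕ} {AI AE : Matrix (Fin s) (Fin s) ℝ}
    {P : Matrix (Fin s) (Fin s) ℝ → Prop} (hI : P AI) (hE : P AE) (q m : Fin N) :
    P (ADIGARKBlocks N AI AE q m) := by
  unfold ADIGARKBlocks
  split_ifs <;> assumption

theorem garkOrderConditions_three_ADIGARKBlocks {s : ℕ} (N : ℕ)
    {AI AE : Matrix (Fin s) (Fin s) ℝ} {b c : Fin s → ℝ}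
    (hAI : AI *ᵥ 1 = c) (hAE : AE *ᵥ 1 = c)
    (h₁ : b ⬝ᵥ 1 = 1) (h₂ : b ⬝ᵥ c = 1 / 2) (h₃ : b ⬝ᵥ (c * c) = 1 / 3)
    (hI : b ⬝ᵥ AI *ᵥ c = 1 / 6) (hE : b ⬝ᵥ AE *ᵥ c = 1 / 6) :
    GARKOrderConditions 3 (ADIGARKBlocks N AI AE) (fun _ => b) := by
  have hc (q m : Fin N) : ADIGARKBlocks N AI AE q m *ᵥ 1 = c :=
    ADIGARKBlocks.induction (P := fun A => A *ᵥ 1 = c) hAI hAE q m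
  refine ⟨fun _ _ => h₁, fun _ σ ν => ?_, fun _ => ⟨fun σ ν μ => ?_, fun σ ν μ => ?_⟩,
    fun h => absurd h (by norm_num)⟩
  · simpa only [hc] using h₂
  · simpa only [hc] using h₃
  · simp only [hc]
    exact ADIGARKBlocks.induction (P := fun A => b ⬝ᵥ A *ᵥ c = 1 / 6) hI hE σ ν

namespace ADIGARKThree

variable {γ : ℝ}

/-! `field_simp` rewrites a denominator such as `1536 * γ + 448` to `γ * 1536 + 448`, so its
default discharger misses the hypotheses; the `disch` below compares up to `ring_nf`. -/

lemma implicit_row_three_sum (hγ : 6 * γ ^ 3 - 18 * γ ^ 2 + 9 * γ - 1 = 0)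
    (hd₄ : 2624 - 1536 * γ ≠ 0) (hd₅ : 1536 * γ + 448 ≠ 0) :
    (215 * γ + 424) / (2624 - 1536 * γ) + (264 - 841 * γ) / (1536 * γ + 448) + γ =
      (γ + 2) / 4 := by
  field_simp (disch := ring_nf at *; assumption)
  linear_combination -294912 * hγ

lemma weights_sum (hγ : 6 * γ ^ 3 - 18 * γ ^ 2 + 9 * γ - 1 = 0)
    (hd₁ : 4 * γ + 8 ≠ 0) (hd₂ : 352 - 900 * γ ≠ 0) (hd₃ : 575 - 477 * γ ≠ 0) :
    (2 * γ + 1) / (4 * γ + 8) + (31 - 14 * γ) / (352 - 900 * γ) +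
      (320 * γ + 224) / (575 - 477 * γ) + γ = 1 := by
  field_simp (disch := ring_nf at *; assumption)
  linear_combination (643416 + 286200 * γ) * hγ

lemma explicit_row_three_sum (hγ : 6 * γ ^ 3 - 18 * γ ^ 2 + 9 * γ - 1 = 0)
    (hd₆ : 8876160 * γ + 7175968 ≠ 0) (hd₇ : 92 * γ - 9 ≠ 0) :
    (12526987 * γ + 655304) / (8876160 * γ + 7175968) +
      15 * (215 * γ + 152) / (2144 * (92 * γ - 9)) = (γ + 2) / 4 := by
  field_simp (disch := ring_nf at *; assumption)
  linear_combination -34025280 * hγ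

lemma explicit_row_four_sum (hγ : 6 * γ ^ 3 - 18 * γ ^ 2 + 9 * γ - 1 = 0)
    (hd₈ : 17071 * γ + 921 ≠ 0) (hd₉ : 17727 * γ - 15511 ≠ 0) (hd₁₀ : 1371 * γ + 379 ≠ 0) :
    (2370311 * γ - 563481) / (134 * (17071 * γ + 921)) +
      (380783 - 137789 * γ) / (134 * (17727 * γ - 15511)) +
      (1000 - 304 * γ) / (1371 * γ + 379) = 1 := by
  field_simp (disch := ring_nf at *; assumption)
  linear_combination -16840817328 * hγ

lemma weights_dot_abscissae (hγ : 6 * γ ^ 3 - 18 * γ ^ 2 + 9 * γ - 1 = 0)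
    (hd₂ : 352 - 900 * γ ≠ 0) (hd₃ : 575 - 477 * γ ≠ 0) :
    (31 - 14 * γ) / (352 - 900 * γ) * (2 * γ) +
      (320 * γ + 224) / (575 - 477 * γ) * ((γ + 2) / 4) + γ = 1 / 2 := by
  field_simp (disch := ring_nf at *; assumption)
  linear_combination 61776 * hγ

lemma weights_dot_abscissae_sq (hγ : 6 * γ ^ 3 - 18 * γ ^ 2 + 9 * γ - 1 = 0)
    (hd₂ : 352 - 900 * γ ≠ 0) (hd₃ : 575 - 477 * γ ≠ 0) :
    (31 - 14 * γ) / (352 - 900 * γ) * (2 * γ * (2 * γ)) +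
      (320 * γ + 224) / (575 - 477 * γ) * ((γ + 2) / 4 * ((γ + 2) / 4)) + γ = 1 / 3 := by
  field_simp (disch := ring_nf at *; assumption)
  linear_combination (143264 / 3 + 1452 * γ) * hγ

/-- The last row of `Aᴵ` is `bᵀ`, so the last entry of `Aᴵc` is `bᵀc = 1/2`. -/
lemma weights_dot_implicit_mulVec_abscissae (hγ : 6 * γ ^ 3 - 18 * γ ^ 2 + 9 * γ - 1 = 0)
    (hd₂ : 352 - 900 * γ ≠ 0) (hd₃ : 575 - 477 * γ ≠ 0) (hd₅ : 1536 * γ + 448 ≠ 0) :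
    (31 - 14 * γ) / (352 - 900 * γ) * (γ * (2 * γ)) +
      (320 * γ + 224) / (575 - 477 * γ) *
        ((264 - 841 * γ) / (1536 * γ + 448) * (2 * γ) + γ * ((γ + 2) / 4)) +
      γ / 2 = 1 / 6 := by
  field_simp (disch := ring_nf at *; assumption)
  linear_combination (45337600 / 3 + 32019072 * γ - 15012864 * γ ^ 2) * hγ

lemma weights_dot_explicit_mulVec_abscissae (hγ : 6 * γ ^ 3 - 18 * γ ^ 2 + 9 * γ - 1 = 0)
    (hd₃ : 575 - 477 * γ ≠ 0) (hd₇ : 92 * γ - 9 ≠ 0) (hd₉ : 17727 * γ - 15511 ≠ 0)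
    (hd₁₀ : 1371 * γ + 379 ≠ 0) :
    (320 * γ + 224) / (575 - 477 * γ) * (15 * (215 * γ + 152) / (2144 * (92 * γ - 9)) * (2 * γ)) +
      γ * ((380783 - 137789 * γ) / (134 * (17727 * γ - 15511)) * (2 * γ) +
        (1000 - 304 * γ) / (1371 * γ + 379) * ((γ + 2) / 4)) = 1 / 6 := by
  field_simp (disch := ring_nf at *; assumption)
  linear_combination (10140704025 / 2 - 7073283459467 / 201 * γ - 2279126104609 / 134 * γ ^ 2 +
    2041883046342 / 67 * γ ^ 3) * hγ

end ADIGARKThree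

theorem adi_gark_order_three_coefficients_general (γ : ℝ)
    (hroot : 6 * γ ^ 3 - 18 * γ ^ 2 + 9 * γ - 1 = 0)
    (hd₁ : 4 * γ + 8 ≠ 0) (hd₂ : 352 - 900 * γ ≠ 0) (hd₃ : 575 - 477 * γ ≠ 0)
    (hd₄ : 2624 - 1536 * γ ≠ 0) (hd₅ : 1536 * γ + 448 ≠ 0)
    (hd₆ : 8876160 * γ + 7175968 ≠ 0) (hd₇ : 92 * γ - 9 ≠ 0)
    (hd₈ : 17071 * γ + 921 ≠ 0) (hd₉ : 17727 * γ - 15511 ≠ 0)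
    (hd₁₀ : 1371 * γ + 379 ≠ 0) :
    let b : Fin 4 → ℝ :=
      ![(2 * γ + 1) / (4 * γ + 8),
        (31 - 14 * γ) / (352 - 900 * γ),
        (320 * γ + 224) / (575 - 477 * γ),
        γ]
    let c : Fin 4 → ℝ := ![0, 2 * γ, (γ + 2) / 4, 1]
    let AI : Matrix (Fin 4) (Fin 4) ℝ :=
      !![0, 0, 0, 0;
         γ, γ, 0, 0;
         (215 * γ + 424) / (2624 - 1536 * γ), (264 - 841 * γ) / (1536 * γ + 448), γ, 0;
         (2 * γ + 1) / (4 * γ + 8), (31 - 14 * γ) / (352 - 900 * γ),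
           (320 * γ + 224) / (575 - 477 * γ), γ]
    let AE : Matrix (Fin 4) (Fin 4) ℝ :=
      !![0, 0, 0, 0;
         2 * γ, 0, 0, 0;
         (12526987 * γ + 655304) / (8876160 * γ + 7175968),
           15 * (215 * γ + 152) / (2144 * (92 * γ - 9)), 0, 0;
         (2370311 * γ - 563481) / (134 * (17071 * γ + 921)),
           (380783 - 137789 * γ) / (134 * (17727 * γ - 15511)),
           (1000 - 304 * γ) / (1371 * γ + 379), 0]
    -- internal consistency
    (AI.mulVec (1 : Fin 4 → ℝ) = c ∧ AE.mulVec (1 : Fin 4 → ℝ) = c) ∧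
    -- third-order conditions for both component Runge–Kutta methods
    (b ⬝ᵥ (1 : Fin 4 → ℝ) = 1 ∧ b ⬝ᵥ c = 1/2 ∧ b ⬝ᵥ (c * c) = 1/3 ∧
      b ⬝ᵥ AI.mulVec c = 1/6 ∧ b ⬝ᵥ AE.mulVec c = 1/6) ∧
    -- consequently the ADI-GARK method built from (Aᴵ, Aᴱ, b) is third order
    (∀ N : ℕ, GARKOrderConditions 3 (ADIGARKBlocks N AI AE) (fun _ => b)) := by
  open ADIGARKThree in
  intro b c AI AE
  have hAI : AI *ᵥ 1 = c := by
    ext i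
    fin_cases i <;> simp [AI, c, mulVec, dotProduct, Fin.sum_univ_four, ← two_mul,
      implicit_row_three_sum hroot hd₄ hd₅, weights_sum hroot hd₁ hd₂ hd₃]
  have hAE : AE *ᵥ 1 = c := by
    ext i
    fin_cases i <;> simp [AE, c, mulVec, dotProduct, Fin.sum_univ_four,
      explicit_row_three_sum hroot hd₆ hd₇, explicit_row_four_sum hroot hd₈ hd₉ hd₁₀]
  have h₁ : b ⬝ᵥ 1 = 1 := by
    simpa [b, dotProduct, Fin.sum_univ_four] using weights_sum hroot hd₁ hd₂ hd₃
  have h₂ : b ⬝ᵥ c = 1 / 2 := by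
    simpa [b, c, dotProduct, Fin.sum_univ_four] using weights_dot_abscissae hroot hd₂ hd₃
  have h₃ : b ⬝ᵥ (c * c) = 1 / 3 := by
    simpa [b, c, dotProduct, Fin.sum_univ_four] using weights_dot_abscissae_sq hroot hd₂ hd₃
  have hI : b ⬝ᵥ AI *ᵥ c = 1 / 6 := by
    simpa [b, c, AI, mulVec, dotProduct, Fin.sum_univ_four, weights_dot_abscissae hroot hd₂ hd₃,
      ← div_eq_mul_inv]
      using weights_dot_implicit_mulVec_abscissae hroot hd₂ hd₃ hd₅
  have hE : b ⬝ᵥ AE *ᵥ c = 1 / 6 := by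
    simpa [b, c, AE, mulVec, dotProduct, Fin.sum_univ_four]
      using weights_dot_explicit_mulVec_abscissae hroot hd₃ hd₇ hd₉ hd₁₀
  exact ⟨⟨hAI, hAE⟩, ⟨h₁, h₂, h₃, hI, hE⟩,
    fun N => garkOrderConditions_three_ADIGARKBlocks N hAI hAE h₁ h₂ h₃ hI hE⟩

/-- The third-order ADI-GARK method of the paper: with `γ` the middle root of
`6γ³ - 18γ² + 9γ - 1 = 0` (γ ≈ 0.43586652150845900) and all denominators nonzero, the
tableau is internally consistent (`Aᴵ𝟙 = Aᴱ𝟙 = c`) and both component Runge–Kutta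
methods satisfy the third-order conditions; consequently, the ADI-GARK method built
from `(Aᴵ, Aᴱ, b)` is third order. -/
theorem adi_gark_order_three_coefficients (γ : ℝ)
    (hroot : 6 * γ ^ 3 - 18 * γ ^ 2 + 9 * γ - 1 = 0)
    (hmid₁ : (43 : ℝ) / 100 < γ) (hmid₂ : γ < (44 : ℝ) / 100)
    (hd₁ : 4 * γ + 8 ≠ 0) (hd₂ : 352 - 900 * γ ≠ 0) (hd₃ : 575 - 477 * γ ≠ 0)
    (hd₄ : 2624 - 1536 * γ ≠ 0) (hd₅ : 1536 * γ + 448 ≠ 0)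
    (hd₆ : 8876160 * γ + 7175968 ≠ 0) (hd₇ : 92 * γ - 9 ≠ 0)
    (hd₈ : 17071 * γ + 921 ≠ 0) (hd₉ : 17727 * γ - 15511 ≠ 0)
    (hd₁₀ : 1371 * γ + 379 ≠ 0) :
    let b : Fin 4 → ℝ :=
      ![(2 * γ + 1) / (4 * γ + 8),
        (31 - 14 * γ) / (352 - 900 * γ),
        (320 * γ + 224) / (575 - 477 * γ),
        γ]
    let c : Fin 4 → ℝ := ![0, 2 * γ, (γ + 2) / 4, 1]
    let AI : Matrix (Fin 4) (Fin 4) ℝ :=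
      !![0, 0, 0, 0;
         γ, γ, 0, 0;
         (215 * γ + 424) / (2624 - 1536 * γ), (264 - 841 * γ) / (1536 * γ + 448), γ, 0;
         (2 * γ + 1) / (4 * γ + 8), (31 - 14 * γ) / (352 - 900 * γ),
           (320 * γ + 224) / (575 - 477 * γ), γ]
    let AE : Matrix (Fin 4) (Fin 4) ℝ :=
      !![0, 0, 0, 0;
         2 * γ, 0, 0, 0;
         (12526987 * γ + 655304) / (8876160 * γ + 7175968),
           15 * (215 * γ + 152) / (2144 * (92 * γ - 9)), 0, 0;
         (2370311 * γ - 563481) / (134 * (17071 * γ + 921)),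
           (380783 - 137789 * γ) / (134 * (17727 * γ - 15511)),
           (1000 - 304 * γ) / (1371 * γ + 379), 0]
    -- internal consistency
    (AI.mulVec (1 : Fin 4 → ℝ) = c ∧ AE.mulVec (1 : Fin 4 → ℝ) = c) ∧
    -- third-order conditions for both component Runge–Kutta methods
    (b ⬝ᵥ (1 : Fin 4 → ℝ) = 1 ∧ b ⬝ᵥ c = 1/2 ∧ b ⬝ᵥ (c * c) = 1/3 ∧
      b ⬝ᵥ AI.mulVec c = 1/6 ∧ b ⬝ᵥ AE.mulVec c = 1/6) ∧
    -- consequently the ADI-GARK method built from (Aᴵ, Aᴱ, b) is third order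
    (∀ N : ℕ, GARKOrderConditions 3 (ADIGARKBlocks N AI AE) (fun _ => b)) :=
  adi_gark_order_three_coefficients_general γ hroot hd₁ hd₂ hd₃ hd₄ hd₅ hd₆ hd₇ hd₈ hd₉ hd₁₀
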